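/- arXiv:1808.07050 — 2 statements merged into one kernel-verified Lean document; each statement's English description precedes it below -/
import Mathlib

section
/- Consider the program P with rules: fact p(a), and 'p(b) ← card{X:p(X)} > 0'. Under the aggregate-reduct semantics (reduct w.r.t. S deletes the second rule if |{t : p(t)∈S}| = 0, otherwise replaces its body by {p(t) : p(t) ∈ S}; S is an answer set iff S is the least model of the reduct), P has no answer set: neither {p(a)} nor {p(a),p(b)} (nor any other subset of {p(a),p(b)}) is an answer set. -/
/-!
Any answer set `S` contains `p(a)`, so it is nonempty and the reduct keeps the rule
`p(b) ← S`, whose body `S` then holds; hence `p(b) ∈ S`. But that is the only rule with head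
`p(b)` and its body contains `p(b)` itself, so removing `p(b)` from a model leaves a model,
and a least model cannot contain `p(b)`.
-/

/-- Models and least models of ground definite programs. -/
def IsModel {α : Type*} (P : Set (α × Set α)) (A : Set α) : Prop :=
  ∀ r ∈ P, r.2 ⊆ A → r.1 ∈ A

def IsLeastModel {α : Type*} (P : Set (α × Set α)) (A : Set α) : Prop :=
  IsModel P A ∧ ∀ M : Set α, IsModel P M → A ⊆ M

/-- Atoms: `false` = p(a), `true` = p(b).  Reduct of the program
`{p(a)., p(b) ← card{X:p(X)} > 0}` w.r.t. S : the fact p(a) stays; the second rule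
is deleted if S = ∅ and otherwise becomes `p(b) ← (all atoms of S)`. -/
def reduct (S : Set Bool) : Set (Bool × Set Bool) :=
  {r | r = (false, (∅ : Set Bool))} ∪ {r | S.Nonempty ∧ r = (true, S)}

def AnswerSet (S : Set Bool) : Prop := IsLeastModel (reduct S) S

section DefiniteProgram

variable {α : Type*} {P : Set (α × Set α)} {A : Set α} {x : α}

theorem IsModel.diff_singleton (hA : IsModel P A) (hx : ∀ r ∈ P, r.1 = x → x ∈ r.2) :
    IsModel P (A \ {x}) := by
  intro r hr hbody
  refine ⟨hA r hr (hbody.trans Set.sdiff_subset), fun hhead => ?_⟩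
  exact (hbody (hx r hr hhead)).2 rfl

theorem IsLeastModel.notMem_of_forall_head_mem_body (hA : IsLeastModel P A)
    (hx : ∀ r ∈ P, r.1 = x → x ∈ r.2) : x ∉ A :=
  fun hxA => (hA.2 _ (hA.1.diff_singleton hx) hxA).2 rfl

end DefiniteProgram

theorem not_answerSet (S : Set Bool) : ¬ AnswerSet S := by
  intro hS
  have hfalse : false ∈ S := hS.1 (false, ∅) (Or.inl rfl) (Set.empty_subset S)
  have htrue : true ∈ S := hS.1 (true, S) (Or.inr ⟨⟨false, hfalse⟩, rfl⟩) subset_rfl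
  refine hS.notMem_of_forall_head_mem_body ?_ htrue
  rintro r (rfl | ⟨-, rfl⟩) hhead
  · cases hhead
  · exact htrue

theorem no_answer_set :
    (∀ S : Set Bool, ¬ AnswerSet S) ∧
    ¬ AnswerSet {false} ∧ ¬ AnswerSet {false, true} :=
  ⟨not_answerSet, not_answerSet _, not_answerSet _⟩
end

section
/- Splitting for aggregate-free programs with possibly infinite bodies: Let Π₁ and Π₂ be ground definite programs (rules with one head atom and a set of body atoms, bodies possibly infinite), and let U be a set of atoms such that every atom occurring (in head or body) in Π₁ belongs to U, and no head atom of Π₂ belongs to U. Then A is the least model of Π₁ ∪ Π₂ if and only if A ∩ U is the least model of Π₁ and A is the least model of the program (A ∩ U) ∪ Π₂, where (A ∩ U) is added as a set of facts. -/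
section DefiniteProgram

variable {α : Type*} {P Q P1 P2 : Set (α × Set α)} {A M S U : Set α}

theorem isModel_union : IsModel (P ∪ Q) A ↔ IsModel P A ∧ IsModel Q A :=
  ⟨fun h => ⟨fun r hr => h r (.inl hr), fun r hr => h r (.inr hr)⟩,
    fun ⟨hP, hQ⟩ r hr => hr.elim (hP r) (hQ r)⟩

theorem isModel_facts_union :
    IsModel ({r : α × Set α | r.1 ∈ S ∧ r.2 = ∅} ∪ Q) M ↔ S ⊆ M ∧ IsModel Q M := by
  refine isModel_union.trans (and_congr_left' ⟨fun h x hx => ?_, ?_⟩)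
  · exact h (x, ∅) ⟨hx, rfl⟩ (Set.empty_subset M)
  · rintro hS r ⟨hr, -⟩ -
    exact hS hr

theorem isModel_of_forall_head_mem (h : ∀ r ∈ P, r.1 ∈ A) : IsModel P A :=
  fun r hr _ => h r hr

theorem IsModel.inter (hA : IsModel P A) (hM : IsModel P M) : IsModel P (A ∩ M) :=
  fun r hr hb => ⟨hA r hr (hb.trans Set.inter_subset_left), hM r hr (hb.trans Set.inter_subset_right)⟩

theorem IsModel.union_compl (hM : IsModel P M) (hP : ∀ r ∈ P, r.2 ⊆ U) :
    IsModel P (M ∪ Uᶜ) := fun r hr hb =>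
  .inl <| hM r hr fun _ hx => (hb hx).resolve_right (not_not.2 (hP r hr hx))

theorem isModel_inter_iff (hP : ∀ r ∈ P, r.1 ∈ U ∧ r.2 ⊆ U) :
    IsModel P (A ∩ U) ↔ IsModel P A := by
  refine forall₂_congr fun r hr => ?_
  rw [Set.subset_inter_iff, Set.mem_inter_iff]
  simp only [(hP r hr).1, (hP r hr).2, and_true]

theorem IsLeastModel.inter_subset_of_isModel (hA : IsLeastModel (P1 ∪ P2) A)
    (h₁ : ∀ r ∈ P1, r.2 ⊆ U) (h₂ : ∀ r ∈ P2, r.1 ∉ U) (hM : IsModel P1 M) : A ∩ U ⊆ M := by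
  obtain ⟨hA1, hA2⟩ := isModel_union.1 hA.1
  have hN : IsModel (P1 ∪ P2) (A ∩ (M ∪ Uᶜ)) := isModel_union.2
    ⟨hA1.inter (hM.union_compl h₁),
      hA2.inter (isModel_of_forall_head_mem fun r hr => .inr (h₂ r hr))⟩
  rintro x ⟨hxA, hxU⟩
  exact ((hA.2 _ hN hxA).2).resolve_right (not_not.2 hxU)

theorem IsLeastModel.isLeastModel_inter (hA : IsLeastModel (P1 ∪ P2) A)
    (h₁ : ∀ r ∈ P1, r.1 ∈ U ∧ r.2 ⊆ U) (h₂ : ∀ r ∈ P2, r.1 ∉ U) :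
    IsLeastModel P1 (A ∩ U) :=
  ⟨(isModel_inter_iff h₁).2 (isModel_union.1 hA.1).1,
    fun _ hM => hA.inter_subset_of_isModel (fun r hr => (h₁ r hr).2) h₂ hM⟩

theorem IsLeastModel.isLeastModel_facts_union (hA : IsLeastModel (P1 ∪ P2) A)
    (h₁ : ∀ r ∈ P1, r.1 ∈ U ∧ r.2 ⊆ U) (h₂ : ∀ r ∈ P2, r.1 ∉ U) :
    IsLeastModel ({r : α × Set α | r.1 ∈ A ∩ U ∧ r.2 = ∅} ∪ P2) A := by
  obtain ⟨hA1, hA2⟩ := isModel_union.1 hA.1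
  refine ⟨isModel_facts_union.2 ⟨Set.inter_subset_left, hA2⟩, fun M hM => ?_⟩
  obtain ⟨hAUM, hM2⟩ := isModel_facts_union.1 hM
  have hAM1 : IsModel P1 (A ∩ M) := by
    rw [← isModel_inter_iff h₁, Set.inter_right_comm, Set.inter_eq_left.2 hAUM]
    exact (hA.isLeastModel_inter h₁ h₂).1
  exact (hA.2 _ (isModel_union.2 ⟨hAM1, hA2.inter hM2⟩)).trans Set.inter_subset_right

theorem isLeastModel_union_of_isLeastModel_inter (h₁ : ∀ r ∈ P1, r.1 ∈ U ∧ r.2 ⊆ U)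
    (hAU : IsLeastModel P1 (A ∩ U))
    (hA : IsLeastModel ({r : α × Set α | r.1 ∈ A ∩ U ∧ r.2 = ∅} ∪ P2) A) :
    IsLeastModel (P1 ∪ P2) A := by
  refine ⟨isModel_union.2 ⟨(isModel_inter_iff h₁).1 hAU.1, (isModel_facts_union.1 hA.1).2⟩,
    fun M hM => hA.2 M (isModel_facts_union.2 ⟨?_, (isModel_union.1 hM).2⟩)⟩
  exact hAU.2 M (isModel_union.1 hM).1

end DefiniteProgram

/-- Splitting set theorem for definite programs. -/
theorem splitting {α : Type*} (P1 P2 : Set (α × Set α)) (U : Set α)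
    (h₁ : ∀ r ∈ P1, r.1 ∈ U ∧ r.2 ⊆ U)
    (h₂ : ∀ r ∈ P2, r.1 ∉ U) (A : Set α) :
    IsLeastModel (P1 ∪ P2) A ↔
      IsLeastModel P1 (A ∩ U) ∧
      IsLeastModel ({r : α × Set α | r.1 ∈ A ∩ U ∧ r.2 = ∅} ∪ P2) A :=
  ⟨fun hA => ⟨hA.isLeastModel_inter h₁ h₂, hA.isLeastModel_facts_union h₁ h₂⟩,
    fun ⟨hAU, hA⟩ => isLeastModel_union_of_isLeastModel_inter h₁ hAU hA⟩
end
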